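/- (Proposition 1: A link from Δ-flatness to the set of perturbed distributions.) Fix x ∈ ℝ^d, let p : ℝ^d → ℝ be strictly positive with log∘p differentiable at x, let Δ > 0 and l* ∈ ℝ. Assume θ* is Δ-flat at x for p in the following sense: for every δ ∈ ℝ^{d×m} with ‖δ‖₂ ≤ Δ and δWᵀ symmetric, L(x; θ*+δ, p) = l*. Then for every δ ∈ ℝ^{d×m} with ‖δ‖₂ ≤ Δ and δWᵀ symmetric, and for every choice of the constant C ∈ ℝ in I(·, δ), the perturbed density p̂_δ = e^{−I(·,δ)}·p satisfies L(x; θ*, p̂_δ) = l*. -/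

import Mathlib

open Matrix
open scoped RealInnerProductSpace

/-- The random-feature score model with linear activation:
`s_θ(x) = (1/m) · θ (Wᵀ x + Uᵀ e)`. -/
noncomputable def score (d m de : ℕ) (W : Matrix (Fin d) (Fin m) ℝ)
    (U : Matrix (Fin de) (Fin m) ℝ) (e : Fin de → ℝ)
    (θ : Matrix (Fin d) (Fin m) ℝ) (x : EuclideanSpace ℝ (Fin d)) :
    EuclideanSpace ℝ (Fin d) :=
  (m : ℝ)⁻¹ • ((WithLp.equiv 2 _).symm (θ.mulVec (Wᵀ.mulVec x + Uᵀ.mulVec e)) :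
    EuclideanSpace ℝ (Fin d))

/-- The tilting exponent `I(x, δ) = (1/(2m))·xᵀ(δWᵀ)x + (1/m)·xᵀ(δUᵀe) + C`. -/
noncomputable def tiltExp (d m de : ℕ) (W : Matrix (Fin d) (Fin m) ℝ)
    (U : Matrix (Fin de) (Fin m) ℝ) (e : Fin de → ℝ)
    (δ : Matrix (Fin d) (Fin m) ℝ) (C : ℝ) (x : EuclideanSpace ℝ (Fin d)) : ℝ :=
  (2 * (m : ℝ))⁻¹ * ⟪x, ((WithLp.equiv 2 _).symm ((δ * Wᵀ).mulVec x) :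
      EuclideanSpace ℝ (Fin d))⟫
    + (m : ℝ)⁻¹ * ⟪x, ((WithLp.equiv 2 _).symm (δ.mulVec (Uᵀ.mulVec e)) :
      EuclideanSpace ℝ (Fin d))⟫
    + C

/-- The perturbed density `p̂_δ(x) = e^{−I(x,δ)} · p(x)`. -/
noncomputable def tiltedDensity (d m de : ℕ) (W : Matrix (Fin d) (Fin m) ℝ)
    (U : Matrix (Fin de) (Fin m) ℝ) (e : Fin de → ℝ)
    (δ : Matrix (Fin d) (Fin m) ℝ) (C : ℝ)
    (p : EuclideanSpace ℝ (Fin d) → ℝ) (x : EuclideanSpace ℝ (Fin d)) : ℝ :=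
  Real.exp (-(tiltExp d m de W U e δ C x)) * p x


/-- The score-matching loss at `x`: `L(x; θ, p) = ‖s_θ(x) − ∇ log p(x)‖₂²`. -/
noncomputable def smLoss (d m de : ℕ) (W : Matrix (Fin d) (Fin m) ℝ)
    (U : Matrix (Fin de) (Fin m) ℝ) (e : Fin de → ℝ)
    (θ : Matrix (Fin d) (Fin m) ℝ) (p : EuclideanSpace ℝ (Fin d) → ℝ)
    (x : EuclideanSpace ℝ (Fin d)) : ℝ :=
  ‖score d m de W U e θ x - gradient (fun y => Real.log (p y)) x‖ ^ 2

/-- The Frobenius norm `‖δ‖₂` of a matrix. -/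
noncomputable def frobNorm (d m : ℕ) (δ : Matrix (Fin d) (Fin m) ℝ) : ℝ :=
  Real.sqrt (∑ i, ∑ j, δ i j ^ 2)

/-!
When `δ Wᵀ` is symmetric, the tilting exponent `I(·, δ)` is a potential for the score
perturbation: `∇ₓ I(x, δ) = s_δ(x) = s_{θ*+δ}(x) - s_{θ*}(x)`. Tilting `p` by `e^{-I}` therefore
shifts `∇ log p` by exactly `-s_δ`, so `L(x; θ*, p̂_δ) = L(x; θ* + δ, p) = l*`.
-/

open Real

section Gradient

variable {F : Type*} [NormedAddCommGroup F] [InnerProductSpace ℝ F] [CompleteSpace F]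
  {f g : F → ℝ} {f' g' x : F}

theorem HasGradientAt.add (hf : HasGradientAt f f' x) (hg : HasGradientAt g g' x) :
    HasGradientAt (fun y => f y + g y) (f' + g') x := by
  rw [hasGradientAt_iff_hasFDerivAt] at *
  rw [map_add]
  exact hf.add hg

theorem HasGradientAt.neg (hf : HasGradientAt f f' x) :
    HasGradientAt (fun y => -f y) (-f') x := by
  rw [hasGradientAt_iff_hasFDerivAt] at *
  rw [map_neg]
  exact hf.neg

theorem HasGradientAt.const_mul (c : ℝ) (hf : HasGradientAt f f' x) :
    HasGradientAt (fun y => c * f y) (c • f') x := by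
  rw [hasGradientAt_iff_hasFDerivAt] at *
  rw [map_smul]
  exact hf.const_mul c

theorem HasGradientAt.add_const (c : ℝ) (hf : HasGradientAt f f' x) :
    HasGradientAt (fun y => f y + c) f' x := by
  rw [hasGradientAt_iff_hasFDerivAt] at *
  exact hf.add_const c

theorem hasGradientAt_inner_const (v x : F) : HasGradientAt (fun y => ⟪y, v⟫) v x := by
  have hdual : (fun y => ⟪y, v⟫) = InnerProductSpace.toDual ℝ F v :=
    funext fun y => real_inner_comm v y
  rw [hasGradientAt_iff_hasFDerivAt, hdual]
  exact (InnerProductSpace.toDual ℝ F v).hasFDerivAt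

theorem LinearMap.IsSymmetric.hasGradientAt_inner_apply_self {T : F →L[ℝ] F}
    (hT : (T : F →ₗ[ℝ] F).IsSymmetric) (x : F) :
    HasGradientAt (fun y => ⟪y, T y⟫) (2 • T x) x := by
  have hre : (fun y => ⟪y, T y⟫) = T.reApplyInnerSelf := funext fun y => by
    rw [T.reApplyInnerSelf_apply, RCLike.re_to_real]
    exact real_inner_comm _ _
  rw [hasGradientAt_iff_hasFDerivAt, hre, map_nsmul]
  exact (hT.hasStrictFDerivAt_reApplyInnerSelf x).hasFDerivAt

end Gradient

section RandomFeature

variable {d m de : ℕ} {W : Matrix (Fin d) (Fin m) ℝ} {U : Matrix (Fin de) (Fin m) ℝ}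
  {e : Fin de → ℝ}

theorem score_add (θ δ : Matrix (Fin d) (Fin m) ℝ) (x : EuclideanSpace ℝ (Fin d)) :
    score d m de W U e (θ + δ) x = score d m de W U e θ x + score d m de W U e δ x := by
  simp only [score, Matrix.add_mulVec, WithLp.equiv_symm_apply, WithLp.toLp_add, smul_add]

theorem hasGradientAt_tiltExp {δ : Matrix (Fin d) (Fin m) ℝ} (hδ : (δ * Wᵀ).IsSymm) (C : ℝ)
    (x : EuclideanSpace ℝ (Fin d)) :
    HasGradientAt (tiltExp d m de W U e δ C) (score d m de W U e δ x) x := by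
  set T := toEuclideanCLM (𝕜 := ℝ) (δ * Wᵀ)
  have hT : (T : EuclideanSpace ℝ (Fin d) →ₗ[ℝ] EuclideanSpace ℝ (Fin d)).IsSymmetric :=
    isSymmetric_toEuclideanLin_iff.mpr (isHermitian_iff_isSymm.mpr hδ)
  have hquad := (hT.hasGradientAt_inner_apply_self x).const_mul (2 * (m : ℝ))⁻¹
  have hlin :=
    (hasGradientAt_inner_const (WithLp.toLp 2 (δ *ᵥ (Uᵀ *ᵥ e))) x).const_mul (m : ℝ)⁻¹
  convert (hquad.add hlin).add_const C using 1
  · rfl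
  have halve : (2 * (m : ℝ))⁻¹ * 2 = (m : ℝ)⁻¹ := by
    rw [mul_inv, mul_right_comm, inv_mul_cancel₀ two_ne_zero, one_mul]
  rw [← Nat.cast_smul_eq_nsmul ℝ, smul_smul, Nat.cast_ofNat, halve, ← smul_add]
  simp only [score, mulVec_add, mulVec_mulVec, WithLp.equiv_symm_apply, WithLp.toLp_add]
  rfl

theorem gradient_log_tiltedDensity {p : EuclideanSpace ℝ (Fin d) → ℝ} (hp : ∀ y, 0 < p y)
    {x : EuclideanSpace ℝ (Fin d)} (hlogp : DifferentiableAt ℝ (fun y => log (p y)) x)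
    {δ : Matrix (Fin d) (Fin m) ℝ} (hδ : (δ * Wᵀ).IsSymm) (C : ℝ) :
    gradient (fun y => log (tiltedDensity d m de W U e δ C p y)) x =
      -score d m de W U e δ x + gradient (fun y => log (p y)) x := by
  have hlog : (fun y => log (tiltedDensity d m de W U e δ C p y)) =
      fun y => -tiltExp d m de W U e δ C y + log (p y) := funext fun y => by
    rw [tiltedDensity, log_mul (exp_ne_zero _) (hp y).ne', log_exp]
  rw [hlog]
  exact ((hasGradientAt_tiltExp hδ C x).neg.add hlogp.hasGradientAt).gradient

theorem smLoss_tiltedDensity (θ : Matrix (Fin d) (Fin m) ℝ) {p : EuclideanSpace ℝ (Fin d) → ℝ}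
    (hp : ∀ y, 0 < p y) {x : EuclideanSpace ℝ (Fin d)}
    (hlogp : DifferentiableAt ℝ (fun y => log (p y)) x)
    {δ : Matrix (Fin d) (Fin m) ℝ} (hδ : (δ * Wᵀ).IsSymm) (C : ℝ) :
    smLoss d m de W U e θ (tiltedDensity d m de W U e δ C p) x =
      smLoss d m de W U e (θ + δ) p x := by
  rw [smLoss, smLoss, gradient_log_tiltedDensity hp hlogp hδ C, score_add]
  congr 2
  abel

end RandomFeature

theorem flat_minimum_flat_on_perturbed_distributions_general (d m de : ℕ)
    (θs W : Matrix (Fin d) (Fin m) ℝ) (U : Matrix (Fin de) (Fin m) ℝ) (e : Fin de → ℝ)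
    (p : EuclideanSpace ℝ (Fin d) → ℝ) (hp : ∀ y, 0 < p y)
    (x : EuclideanSpace ℝ (Fin d))
    (hlogp : DifferentiableAt ℝ (fun y => Real.log (p y)) x)
    (Δ : ℝ) (lstar : ℝ)
    (hflat : ∀ δ : Matrix (Fin d) (Fin m) ℝ, frobNorm d m δ ≤ Δ → (δ * Wᵀ).IsSymm →
      smLoss d m de W U e (θs + δ) p x = lstar) :
    ∀ δ : Matrix (Fin d) (Fin m) ℝ, frobNorm d m δ ≤ Δ → (δ * Wᵀ).IsSymm →
      ∀ C : ℝ, smLoss d m de W U e θs (tiltedDensity d m de W U e δ C p) x = lstar := by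
  intro δ hδ hsymm C
  rw [smLoss_tiltedDensity θs hp hlogp hsymm C]
  exact hflat δ hδ hsymm

/-- **Proposition 1: from Δ-flatness to the set of perturbed distributions.**
If `θ*` is `Δ`-flat at `x` for `p` (i.e. `L(x; θ*+δ, p) = l*` for every `δ` with `‖δ‖₂ ≤ Δ`
and `δWᵀ` symmetric), then for every such `δ` and every choice of the constant `C`, the
perturbed density `p̂_δ = e^{−I(·,δ)}·p` satisfies `L(x; θ*, p̂_δ) = l*`. -/
theorem flat_minimum_flat_on_perturbed_distributions (d m de : ℕ) (hd : 0 < d) (hm : 0 < m)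
    (hde : 0 < de)
    (θs W : Matrix (Fin d) (Fin m) ℝ) (U : Matrix (Fin de) (Fin m) ℝ) (e : Fin de → ℝ)
    (p : EuclideanSpace ℝ (Fin d) → ℝ) (hp : ∀ y, 0 < p y)
    (x : EuclideanSpace ℝ (Fin d))
    (hlogp : DifferentiableAt ℝ (fun y => Real.log (p y)) x)
    (Δ : ℝ) (hΔ : 0 < Δ) (lstar : ℝ)
    (hflat : ∀ δ : Matrix (Fin d) (Fin m) ℝ, frobNorm d m δ ≤ Δ → (δ * Wᵀ).IsSymm →
      smLoss d m de W U e (θs + δ) p x = lstar) :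
    ∀ δ : Matrix (Fin d) (Fin m) ℝ, frobNorm d m δ ≤ Δ → (δ * Wᵀ).IsSymm →
      ∀ C : ℝ, smLoss d m de W U e θs (tiltedDensity d m de W U e δ C p) x = lstar :=
  flat_minimum_flat_on_perturbed_distributions_general d m de θs W U e p hp x hlogp Δ lstar hflat
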